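/- Let N₁, N₂, N₃, N₄ ∈ ℝ³ be unit vectors and j₁,…,j₄ > 0 with Σᵢ jᵢNᵢ = 0, set Xᵢ = jᵢNᵢ, and assume V(X) := det(X₁,X₂,X₃) ≠ 0. Let ℓ¹,…,ℓ⁴ be the dual tetrad vectors and Lⁱʲ = √|V(X)|·(ℓⁱ − ℓʲ) the edge vectors, and set V(L) = det(L¹⁴, L²⁴, L³⁴). Then det( Σᵢ jᵢ (I₃ − Nᵢ Nᵢᵀ) ) = ((j₁+j₂+j₃+j₄)·V(L)² / (j₁j₂j₃j₄)) · ( Σ_{1≤i<k≤4} jᵢ jₖ ‖Lⁱᵏ‖² − V(L)² ). (The determinant of the orbit metric G expressed through the edge lengths and the volume of the tetrahedron.) -/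

import Mathlib

/-!
With `s = Σ jᵢ`, the orbit metric is `G = s • 1 − Σ jᵢ NᵢNᵢᵀ`, and the unit norms give
`tr (Σ jᵢ NᵢNᵢᵀ) = s`, so the characteristic-polynomial expansion collapses to
`det G = s Σ_{i<k} jᵢjₖ‖Nᵢ × Nₖ‖² − Σ_{a<b<c} jₐj_bj_c det(Nₐ, N_b, N_c)²`.
Closure makes each `det(Xₐ, X_b, X_c)` equal to `±V`, so the triple sum is `s V² / Πj`.
On the tetrahedron side, closure gives `V (ℓⁱ − ℓ⁴) = Xₐ × X_b` (the dual basis of `X₁, X₂, X₃`),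
hence `V(L)² = |V|` and `|V| ‖Lⁱᵏ‖² = ‖Xₐ × X_b‖²` for the complementary pair `{a, b}`;
finally `jᵢjₖ ‖Xₐ × X_b‖² = Πj · jₐj_b ‖Nₐ × N_b‖²`.
-/

open Matrix

infixl:74 " ×₃ " => crossProduct

/-- Determinant of the 3×3 matrix with columns `a`, `b`, `c`. -/
noncomputable def det3 (a b c : Fin 3 → ℝ) : ℝ := (Matrix.of ![a, b, c])ᵀ.det

/-- The dual tetrad `ℓⁱ = (1/4V) εⁱʲᵏˡ u_j [X_k, X_l]` (with `u = (1/2)(1,1,1,1)`),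
written out via cross products (0-indexed: `ℓ¹ = dualTetrad X 0`, etc.). -/
noncomputable def dualTetrad (X : Fin 4 → Fin 3 → ℝ) : Fin 4 → Fin 3 → ℝ :=
  (4 * det3 (X 0) (X 1) (X 2))⁻¹ •
    ![(X 1) ×₃ (X 2) + (X 2) ×₃ (X 3) + (X 3) ×₃ (X 1),
      (X 2) ×₃ (X 0) + (X 0) ×₃ (X 3) + (X 3) ×₃ (X 2),
      (X 0) ×₃ (X 1) + (X 1) ×₃ (X 3) + (X 3) ×₃ (X 0),
      (X 1) ×₃ (X 0) + (X 0) ×₃ (X 2) + (X 2) ×₃ (X 1)]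

/-- Edge vectors of the tetrahedron: `Lⁱʲ = √|V(X)| (ℓⁱ − ℓʲ)`. -/
noncomputable def edgeVec (X : Fin 4 → Fin 3 → ℝ) (i k : Fin 4) : Fin 3 → ℝ :=
  Real.sqrt |det3 (X 0) (X 1) (X 2)| • (dualTetrad X i - dualTetrad X k)

/-- The orbit metric `G = Σᵢ jᵢ (I₃ − Nᵢ Nᵢᵀ)`. -/
noncomputable def Gmat (j : Fin 4 → ℝ) (N : Fin 4 → Fin 3 → ℝ) : Matrix (Fin 3) (Fin 3) ℝ :=
  Matrix.of fun a b => ∑ i, j i * ((if a = b then (1 : ℝ) else 0) - N i a * N i b)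

theorem det3_apply (u v w : Fin 3 → ℝ) :
    det3 u v w = u 0 * (v 1 * w 2 - v 2 * w 1) - v 0 * (u 1 * w 2 - u 2 * w 1)
      + w 0 * (u 1 * v 2 - u 2 * v 1) := by
  rw [det3, det_transpose, det_fin_three]
  simp only [of_apply, cons_val', cons_val_fin_one, cons_val_zero, cons_val_one, cons_val]
  ring

theorem det3_smul (a b c : ℝ) (u v w : Fin 3 → ℝ) :
    det3 (a • u) (b • v) (c • w) = a * b * c * det3 u v w := by
  simp only [det3_apply, Pi.smul_apply, smul_eq_mul]
  ring

theorem det3_cross_cross_cross (u v w : Fin 3 → ℝ) :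
    det3 (v ×₃ w) (w ×₃ u) (u ×₃ v) = det3 u v w ^ 2 := by
  simp only [det3_apply, cross_apply, cons_val_zero, cons_val_one, cons_val]
  ring

theorem sum_pairs_fin_four {M : Type*} [AddCommMonoid M] (f : Fin 4 → Fin 4 → M) :
    (∑ i, ∑ k, if i < k then f i k else 0) = f 0 1 + f 0 2 + f 0 3 + f 1 2 + f 1 3 + f 2 3 := by
  simp only [Fin.sum_univ_four, Fin.reduceLT, Fin.lt_irrefl, if_true, if_false, zero_add, add_zero]
  abel

theorem eq_neg_sum_of_sum_fin_four_eq_zero {M : Type*} [AddCommGroup M] {Y : Fin 4 → M}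
    (h : ∑ i, Y i = 0) : Y 3 = -(Y 0 + Y 1 + Y 2) := by
  rw [Fin.sum_univ_four] at h
  exact eq_neg_of_add_eq_zero_right h

theorem det3_of_sum_eq_zero {Y : Fin 4 → Fin 3 → ℝ} (h : ∑ i, Y i = 0) :
    det3 (Y 0) (Y 1) (Y 3) = -det3 (Y 0) (Y 1) (Y 2) ∧
      det3 (Y 0) (Y 2) (Y 3) = det3 (Y 0) (Y 1) (Y 2) ∧
      det3 (Y 1) (Y 2) (Y 3) = -det3 (Y 0) (Y 1) (Y 2) := by
  simp only [eq_neg_sum_of_sum_fin_four_eq_zero h, det3_apply, Pi.neg_apply, Pi.add_apply]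
  exact ⟨by ring, by ring, by ring⟩

/-- The coefficients are the elementary symmetric functions of `Σ cᵢ uᵢuᵢᵀ`, by Cauchy–Binet. -/
theorem det_smul_one_sub_sum_smul_vecMulVec (t : ℝ) (c : Fin 4 → ℝ) (u : Fin 4 → Fin 3 → ℝ) :
    (t • 1 - ∑ i, c i • vecMulVec (u i) (u i)).det =
      t ^ 3 - t ^ 2 * ∑ i, c i * ∑ x, u i x ^ 2
        + t * ∑ i, ∑ k, (if i < k then c i * c k * ∑ x, (u i ×₃ u k) x ^ 2 else 0)
        - (c 0 * c 1 * c 2 * det3 (u 0) (u 1) (u 2) ^ 2 + c 0 * c 1 * c 3 * det3 (u 0) (u 1) (u 3) ^ 2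
          + c 0 * c 2 * c 3 * det3 (u 0) (u 2) (u 3) ^ 2
          + c 1 * c 2 * c 3 * det3 (u 1) (u 2) (u 3) ^ 2) := by
  rw [det_fin_three, sum_pairs_fin_four]
  simp only [Fin.sum_univ_four, Fin.sum_univ_three, Matrix.sub_apply, Matrix.add_apply,
    Matrix.smul_apply, one_apply, vecMulVec_apply, Fin.reduceEq, if_true, if_false, smul_eq_mul,
    cross_apply, cons_val_zero, cons_val_one, cons_val, det3_apply]
  ring

theorem Gmat_eq_smul_one_sub_sum_vecMulVec (j : Fin 4 → ℝ) (N : Fin 4 → Fin 3 → ℝ) :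
    Gmat j N = (∑ i, j i) • 1 - ∑ i, j i • vecMulVec (N i) (N i) := by
  ext a b
  simp only [Gmat, mul_sub, mul_ite, mul_one, mul_zero, Finset.sum_sub_distrib, Finset.sum_ite_irrel,
    Finset.sum_const_zero, of_apply, Matrix.sub_apply, Matrix.smul_apply, one_apply, smul_eq_mul,
    Matrix.sum_apply, vecMulVec_apply]

theorem det_Gmat {j : Fin 4 → ℝ} {N : Fin 4 → Fin 3 → ℝ} (hN : ∀ i, ∑ x, N i x ^ 2 = 1) :
    (Gmat j N).det =
      (∑ i, j i) * (∑ i, ∑ k, if i < k then j i * j k * ∑ x, (N i ×₃ N k) x ^ 2 else 0)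
        - (j 0 * j 1 * j 2 * det3 (N 0) (N 1) (N 2) ^ 2 + j 0 * j 1 * j 3 * det3 (N 0) (N 1) (N 3) ^ 2
          + j 0 * j 2 * j 3 * det3 (N 0) (N 2) (N 3) ^ 2
          + j 1 * j 2 * j 3 * det3 (N 1) (N 2) (N 3) ^ 2) := by
  rw [Gmat_eq_smul_one_sub_sum_vecMulVec, det_smul_one_sub_sum_smul_vecMulVec]
  simp only [hN, mul_one]
  ring

theorem prod_mul_sum_det3_sq {j : Fin 4 → ℝ} {N X : Fin 4 → Fin 3 → ℝ}
    (hX : ∀ i, X i = j i • N i) (h : ∑ i, X i = 0) :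
    j 0 * j 1 * j 2 * j 3 *
        (j 0 * j 1 * j 2 * det3 (N 0) (N 1) (N 2) ^ 2 + j 0 * j 1 * j 3 * det3 (N 0) (N 1) (N 3) ^ 2
          + j 0 * j 2 * j 3 * det3 (N 0) (N 2) (N 3) ^ 2
          + j 1 * j 2 * j 3 * det3 (N 1) (N 2) (N 3) ^ 2) =
      (∑ i, j i) * det3 (X 0) (X 1) (X 2) ^ 2 := by
  obtain ⟨h013, h023, h123⟩ := det3_of_sum_eq_zero h
  simp only [hX, det3_smul] at h013 h023 h123 ⊢
  rw [Fin.sum_univ_four]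
  linear_combination
    j 2 * (j 0 * j 1 * j 3 * det3 (N 0) (N 1) (N 3) - j 0 * j 1 * j 2 * det3 (N 0) (N 1) (N 2)) * h013
    + j 1 * (j 0 * j 2 * j 3 * det3 (N 0) (N 2) (N 3) + j 0 * j 1 * j 2 * det3 (N 0) (N 1) (N 2)) * h023
    + j 0 * (j 1 * j 2 * j 3 * det3 (N 1) (N 2) (N 3) - j 0 * j 1 * j 2 * det3 (N 0) (N 1) (N 2)) * h123

/-- The rows of the adjugate of the matrix with columns `X 0, X 1, X 2`, padded with `0`:
divided by `det3 (X 0) (X 1) (X 2)` they are the dual basis of `X 0, X 1, X 2`. -/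
noncomputable def cofactorVec (X : Fin 4 → Fin 3 → ℝ) : Fin 4 → Fin 3 → ℝ :=
  ![X 1 ×₃ X 2, X 2 ×₃ X 0, X 0 ×₃ X 1, 0]

theorem dualTetrad_sub_dualTetrad_three {X : Fin 4 → Fin 3 → ℝ} (h : ∑ i, X i = 0) (i : Fin 4) :
    dualTetrad X i - dualTetrad X 3 = (det3 (X 0) (X 1) (X 2))⁻¹ • cofactorVec X i := by
  ext x
  fin_cases i <;> fin_cases x <;>
    simp only [Fin.zero_eta, Fin.mk_one, Fin.reduceFinMk, dualTetrad, cofactorVec,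
      eq_neg_sum_of_sum_fin_four_eq_zero h, cross_apply, Pi.sub_apply, Pi.smul_apply, Pi.add_apply,
      Pi.neg_apply, Pi.zero_apply, smul_eq_mul, cons_val_zero, cons_val_one, cons_val] <;>
    ring

theorem edgeVec_eq_smul_sub {X : Fin 4 → Fin 3 → ℝ} (h : ∑ i, X i = 0) (i k : Fin 4) :
    edgeVec X i k = (√|det3 (X 0) (X 1) (X 2)| * (det3 (X 0) (X 1) (X 2))⁻¹) •
      (cofactorVec X i - cofactorVec X k) := by
  rw [edgeVec, ← sub_sub_sub_cancel_right (dualTetrad X i) (dualTetrad X k) (dualTetrad X 3),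
    dualTetrad_sub_dualTetrad_three h, dualTetrad_sub_dualTetrad_three h, ← smul_sub, smul_smul]

theorem cofactorVec_sub_of_sum_eq_zero {X : Fin 4 → Fin 3 → ℝ} (h : ∑ i, X i = 0) :
    cofactorVec X 0 - cofactorVec X 1 = X 2 ×₃ X 3 ∧
      cofactorVec X 0 - cofactorVec X 2 = X 3 ×₃ X 1 ∧
      cofactorVec X 1 - cofactorVec X 2 = X 0 ×₃ X 3 := by
  refine ⟨?_, ?_, ?_⟩ <;> ext x <;> fin_cases x <;>
    simp only [Fin.zero_eta, Fin.mk_one, Fin.reduceFinMk, cofactorVec,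
      eq_neg_sum_of_sum_fin_four_eq_zero h, cross_apply, Pi.sub_apply, Pi.add_apply, Pi.neg_apply,
      cons_val_zero, cons_val_one, cons_val] <;>
    ring

theorem det3_edgeVec_sq {X : Fin 4 → Fin 3 → ℝ} (h : ∑ i, X i = 0)
    (hV : det3 (X 0) (X 1) (X 2) ≠ 0) :
    det3 (edgeVec X 0 3) (edgeVec X 1 3) (edgeVec X 2 3) ^ 2 = |det3 (X 0) (X 1) (X 2)| := by
  simp only [edgeVec_eq_smul_sub h, det3_smul, cofactorVec, cons_val_zero, cons_val_one, cons_val,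
    sub_zero, det3_cross_cross_cross]
  set V := det3 (X 0) (X 1) (X 2)
  rw [show (√|V| * V⁻¹ * (√|V| * V⁻¹) * (√|V| * V⁻¹) * V ^ 2) ^ 2 = (√|V| ^ 2) ^ 3 / V ^ 2 by
      field_simp, Real.sq_sqrt (abs_nonneg V), ← sq_abs V]
  field_simp

theorem abs_det3_mul_edgeVec_norm_sq {X : Fin 4 → Fin 3 → ℝ} (h : ∑ i, X i = 0)
    (hV : det3 (X 0) (X 1) (X 2) ≠ 0) (i k : Fin 4) :
    |det3 (X 0) (X 1) (X 2)| * ∑ x, edgeVec X i k x ^ 2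
      = ∑ x, (cofactorVec X i - cofactorVec X k) x ^ 2 := by
  simp only [edgeVec_eq_smul_sub h, Pi.smul_apply, smul_eq_mul, mul_pow, ← Finset.mul_sum]
  set V := det3 (X 0) (X 1) (X 2)
  rw [Real.sq_sqrt (abs_nonneg V), inv_pow, ← sq_abs V]
  field_simp

theorem abs_det3_mul_sum_pairs_edgeVec {j : Fin 4 → ℝ} {N X : Fin 4 → Fin 3 → ℝ}
    (hX : ∀ i, X i = j i • N i) (h : ∑ i, X i = 0) (hV : det3 (X 0) (X 1) (X 2) ≠ 0) :
    |det3 (X 0) (X 1) (X 2)| *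
        (∑ i, ∑ k, if i < k then j i * j k * ∑ x, edgeVec X i k x ^ 2 else 0) =
      j 0 * j 1 * j 2 * j 3 *
        ∑ i, ∑ k, if i < k then j i * j k * ∑ x, (N i ×₃ N k) x ^ 2 else 0 := by
  obtain ⟨h01, h02, h12⟩ := cofactorVec_sub_of_sum_eq_zero h
  have hL := abs_det3_mul_edgeVec_norm_sq h hV
  rw [sum_pairs_fin_four, sum_pairs_fin_four]
  calc _ = j 0 * j 1 * (|det3 (X 0) (X 1) (X 2)| * ∑ x, edgeVec X 0 1 x ^ 2)
        + j 0 * j 2 * (|det3 (X 0) (X 1) (X 2)| * ∑ x, edgeVec X 0 2 x ^ 2)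
        + j 0 * j 3 * (|det3 (X 0) (X 1) (X 2)| * ∑ x, edgeVec X 0 3 x ^ 2)
        + j 1 * j 2 * (|det3 (X 0) (X 1) (X 2)| * ∑ x, edgeVec X 1 2 x ^ 2)
        + j 1 * j 3 * (|det3 (X 0) (X 1) (X 2)| * ∑ x, edgeVec X 1 3 x ^ 2)
        + j 2 * j 3 * (|det3 (X 0) (X 1) (X 2)| * ∑ x, edgeVec X 2 3 x ^ 2) := by ring
    _ = j 0 * j 1 * ∑ x, (X 2 ×₃ X 3) x ^ 2 + j 0 * j 2 * ∑ x, (X 3 ×₃ X 1) x ^ 2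
        + j 0 * j 3 * ∑ x, (X 1 ×₃ X 2) x ^ 2 + j 1 * j 2 * ∑ x, (X 0 ×₃ X 3) x ^ 2
        + j 1 * j 3 * ∑ x, (X 2 ×₃ X 0) x ^ 2 + j 2 * j 3 * ∑ x, (X 0 ×₃ X 1) x ^ 2 := by
      simp only [hL, h01, h02, h12]
      simp only [cofactorVec, cons_val_zero, cons_val_one, cons_val, sub_zero]
    _ = _ := by
      simp only [hX, Fin.sum_univ_three, cross_apply, Pi.smul_apply, smul_eq_mul, cons_val_zero,
        cons_val_one, cons_val]
      ring

/-- The determinant of the orbit metric expressed through the edge lengths `Lⁱᵏ` and the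
volume `V(L)` of the tetrahedron:
`det G = ((Σᵢ jᵢ) V(L)² / (j₁j₂j₃j₄)) (Σ_{i<k} jᵢ jₖ ‖Lⁱᵏ‖² − V(L)²)`. -/
theorem det_orbit_metric_via_edges
    (N : Fin 4 → Fin 3 → ℝ) (hN : ∀ i, ∑ x, N i x ^ 2 = 1)
    (j : Fin 4 → ℝ) (hj : ∀ i, 0 < j i)
    (hclo : ∑ i, j i • N i = 0)
    (X : Fin 4 → Fin 3 → ℝ) (hX : ∀ i, X i = j i • N i)
    (hV : det3 (X 0) (X 1) (X 2) ≠ 0) :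
    (Gmat j N).det =
      (∑ i, j i) * det3 (edgeVec X 0 3) (edgeVec X 1 3) (edgeVec X 2 3) ^ 2
          / (j 0 * j 1 * j 2 * j 3) *
        ((∑ i, ∑ k, if i < k then j i * j k * (∑ x, edgeVec X i k x ^ 2) else 0)
          - det3 (edgeVec X 0 3) (edgeVec X 1 3) (edgeVec X 2 3) ^ 2) := by
  have hsum : ∑ i, X i = 0 := by simpa only [hX] using hclo
  have hprod : j 0 * j 1 * j 2 * j 3 ≠ 0 :=
    (mul_pos (mul_pos (mul_pos (hj 0) (hj 1)) (hj 2)) (hj 3)).ne'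
  have hE := abs_det3_mul_sum_pairs_edgeVec hX hsum hV
  have hT := prod_mul_sum_det3_sq hX hsum
  rw [det3_edgeVec_sq hsum hV, det_Gmat hN, div_mul_eq_mul_div, eq_div_iff hprod]
  linear_combination -(∑ i, j i) * hE - hT + (∑ i, j i) * sq_abs (det3 (X 0) (X 1) (X 2))
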